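/- The quadratic equation zX² − (1 + z² − zv + z³v)X + z = 0, equivalent to the vanishing of the kernel L(X,v) = 1 − zXv(1−z²)/((X−z)(1−zX)), has exactly one root which is a formal power series in z with polynomial coefficients in v, namely λ(v) = (1 + z² − zv + z³v − √((1+z²−zv+z³v)² − 4z²))/(2z); in particular L(λ(v),v) = 0. -/

import Mathlib

namespace PrudentAdsorption

/-- A point of the square lattice `ℤ²`. -/
abbrev Pt : Type := ℤ × ℤ

/-- Nearest-neighbour adjacency on the square lattice. -/
def adj (p q : Pt) : Prop := (q.1 - p.1).natAbs + (q.2 - p.2).natAbs = 1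

/-- An `n`-step nearest-neighbour walk on `ℤ²` starting at the origin. -/
structure Walk (n : ℕ) where
  pts : Fin (n + 1) → Pt
  start_eq : pts 0 = (0, 0)
  adj_step : ∀ k : Fin n, adj (pts k.castSucc) (pts k.succ)

namespace Walk

variable {n : ℕ}

/-- The `x`-coordinates of the prefix of the walk up to time `k`. -/
def xset (W : Walk n) (k : Fin (n + 1)) : Finset ℤ :=
  (Finset.Iic k).image fun m => (W.pts m).1

/-- The `y`-coordinates of the prefix of the walk up to time `k`. -/
def yset (W : Walk n) (k : Fin (n + 1)) : Finset ℤ :=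
  (Finset.Iic k).image fun m => (W.pts m).2

lemma xset_nonempty (W : Walk n) (k : Fin (n + 1)) : (W.xset k).Nonempty :=
  ⟨(W.pts k).1, Finset.mem_image.2 ⟨k, Finset.mem_Iic.2 le_rfl, rfl⟩⟩

lemma yset_nonempty (W : Walk n) (k : Fin (n + 1)) : (W.yset k).Nonempty :=
  ⟨(W.pts k).2, Finset.mem_image.2 ⟨k, Finset.mem_Iic.2 le_rfl, rfl⟩⟩

/-- Right side of the bounding box of the prefix up to time `k`. -/
def xmax (W : Walk n) (k : Fin (n + 1)) : ℤ := (W.xset k).max' (W.xset_nonempty k)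

/-- Left (west) side of the bounding box of the prefix up to time `k`. -/
def xmin (W : Walk n) (k : Fin (n + 1)) : ℤ := (W.xset k).min' (W.xset_nonempty k)

/-- Top (north) side of the bounding box of the prefix up to time `k`. -/
def ymax (W : Walk n) (k : Fin (n + 1)) : ℤ := (W.yset k).max' (W.yset_nonempty k)

/-- Bottom (south) side of the bounding box of the prefix up to time `k`. -/
def ymin (W : Walk n) (k : Fin (n + 1)) : ℤ := (W.yset k).min' (W.yset_nonempty k)

/-- Endpoint of the walk. -/
def endPt (W : Walk n) : Pt := W.pts (Fin.last n)

/-- A walk is prudent if it never takes a step towards an already visited vertex: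
the half-line extending each step contains no previously visited vertex. -/
def Prudent (W : Walk n) : Prop :=
  ∀ k : Fin n, ∀ t : ℤ, 1 ≤ t → ∀ m : Fin (n + 1), m ≤ k.castSucc →
    W.pts m ≠ W.pts k.castSucc + t • (W.pts k.succ - W.pts k.castSucc)

/-- The walk stays in the half-plane `y ≥ 0` above the impenetrable surface. -/
def HalfPlane (W : Walk n) : Prop := ∀ m : Fin (n + 1), 0 ≤ (W.pts m).2

/-- A walk is 2-sided if every prefix ends on the north or east side of
its bounding box. -/
def TwoSided (W : Walk n) : Prop :=
  ∀ k : Fin (n + 1), (W.pts k).2 = W.ymax k ∨ (W.pts k).1 = W.xmax k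

/-- Every prefix ends on the north, east or west side of its bounding box. -/
def ThreeSidedEnds (W : Walk n) : Prop :=
  ∀ k : Fin (n + 1), (W.pts k).2 = W.ymax k ∨ (W.pts k).1 = W.xmax k ∨
    (W.pts k).1 = W.xmin k

/-- The walk never steps between the SE and SW corners of its (current) bounding
box when the box has width one. -/
def NoBaseStep (W : Walk n) : Prop :=
  ∀ k : Fin n,
    ¬(W.xmax k.succ = W.xmin k.succ + 1 ∧
      (W.pts k.castSucc).2 = W.ymin k.succ ∧ (W.pts k.succ).2 = W.ymin k.succ ∧
      (((W.pts k.castSucc).1 = W.xmin k.succ ∧ (W.pts k.succ).1 = W.xmax k.succ) ∨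
        ((W.pts k.castSucc).1 = W.xmax k.succ ∧ (W.pts k.succ).1 = W.xmin k.succ)))

/-- A walk is 3-sided if every prefix ends on the north, east or west side
of its bounding box, and it never steps between the SE and SW corners of the
box when the box has width one. -/
def ThreeSided (W : Walk n) : Prop := W.ThreeSidedEnds ∧ W.NoBaseStep

/-- The number of steps of the walk lying along the surface `y = 0`. -/
def surfSteps (W : Walk n) : ℕ :=
  (Finset.univ.filter fun k : Fin n =>
    (W.pts k.castSucc).2 = 0 ∧ (W.pts k.succ).2 = 0).card

end Walk

/-- A 2-sided prudent walk above the impenetrable surface. -/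
def Is2Sided {n : ℕ} (W : Walk n) : Prop := W.Prudent ∧ W.HalfPlane ∧ W.TwoSided

/-- A 3-sided prudent walk above the impenetrable surface. -/
def Is3Sided {n : ℕ} (W : Walk n) : Prop := W.Prudent ∧ W.HalfPlane ∧ W.ThreeSided

/-- `R_{n,i,j,ν}`: number of `n`-step 2-sided prudent walks above the surface
ending on the right side of their bounding box, with `i` the distance from the
endpoint to the top of the box, `j` the height of the endpoint above the
surface and `ν` steps along the surface. -/
noncomputable def Rcount (n i j ν : ℕ) : ℕ :=
  Nat.card {W : Walk n // Is2Sided W ∧ (W.endPt).1 = W.xmax (Fin.last n) ∧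
    W.ymax (Fin.last n) - (W.endPt).2 = (i : ℤ) ∧ (W.endPt).2 = (j : ℤ) ∧
    W.surfSteps = ν}

/-- `T_{n,i,j,ν}`: number of `n`-step 2-sided prudent walks above the surface
ending on the top side of their bounding box, with `i` the distance from the
endpoint to the right of the box, `j` the height of the endpoint above the
surface and `ν` steps along the surface. -/
noncomputable def Tcount (n i j ν : ℕ) : ℕ :=
  Nat.card {W : Walk n // Is2Sided W ∧ (W.endPt).2 = W.ymax (Fin.last n) ∧
    W.xmax (Fin.last n) - (W.endPt).1 = (i : ℤ) ∧ (W.endPt).2 = (j : ℤ) ∧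
    W.surfSteps = ν}

/-- `W_{n,i,j,ν}`: number of `n`-step 2-sided prudent walks above the surface
ending a distance `i` from the NE corner of their bounding box and a distance
`j` above the surface, with `ν` steps along the surface. -/
noncomputable def Wcount (n i j ν : ℕ) : ℕ :=
  Nat.card {W : Walk n // Is2Sided W ∧
    (W.xmax (Fin.last n) - (W.endPt).1) + (W.ymax (Fin.last n) - (W.endPt).2) = (i : ℤ) ∧
    (W.endPt).2 = (j : ℤ) ∧ W.surfSteps = ν}

/-- The coefficient ring `ℤ[u,v,a]`. -/
abbrev A : Type := MvPolynomial (Fin 3) ℤ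

/-- The ring of formal power series `ℤ[u,v,a][[z]]`. -/
abbrev S : Type := PowerSeries A

/-- The series variable `z` (conjugate to the length). -/
noncomputable def zS : S := PowerSeries.X

/-- The catalytic variable `u`. -/
noncomputable def uS : S := PowerSeries.C (MvPolynomial.X 0 : A)

/-- The catalytic variable `v`. -/
noncomputable def vS : S := PowerSeries.C (MvPolynomial.X 1 : A)

/-- The surface fugacity `a`. -/
noncomputable def aS : S := PowerSeries.C (MvPolynomial.X 2 : A)

/-- Generating function `Σ c(n,i,j,ν) zⁿ Uⁱ Vʲ aᵛ` of a family of counts, with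
the catalytic variables evaluated at power series `U`, `V`.  (Counts of `n`-step
walks vanish unless `i,j,ν ≤ n`, so the inner sums may be truncated at `n`, and
the coefficient of `zᵐ` only receives contributions from `n ≤ m`.) -/
noncomputable def gf2 (c : ℕ → ℕ → ℕ → ℕ → ℕ) (U V : S) : S :=
  PowerSeries.mk fun m =>
    PowerSeries.coeff (R := A) m <|
      ∑ n ∈ Finset.range (m + 1), (PowerSeries.X : S) ^ n *
        ∑ i ∈ Finset.range (n + 1), ∑ j ∈ Finset.range (n + 1),
          ∑ ν ∈ Finset.range (n + 1),
            (c n i j ν : S) * U ^ i * V ^ j * aS ^ ν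

/-- `R(U,V)`, the generating function of 2-sided prudent walks above the
surface ending on the right side of their bounding box. -/
noncomputable def Rgf (U V : S) : S := gf2 Rcount U V

/-- `T(U,V)`, the generating function of 2-sided prudent walks above the
surface ending on the top side of their bounding box. -/
noncomputable def Tgf (U V : S) : S := gf2 Tcount U V

/-- `W(U,V)`, the generating function of all 2-sided prudent walks above the
surface, with `U` marking the distance from the endpoint to the NE corner. -/
noncomputable def Wgf (U V : S) : S := gf2 Wcount U V

/-- `c(v) = 1 + z² − zv + z³v`, so that the kernel quadratic is
`zX² − c(v)X + z = 0`. -/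
noncomputable def ck (V : S) : S := 1 + zS ^ 2 - zS * V + zS ^ 3 * V

/-- `λ(v)`: the unique formal power series root of `zX² − c(v)X + z = 0`
(defined as `0` if no such root exists). -/
noncomputable def lam (V : S) : S :=
  open scoped Classical in
  if h : ∃ X : S, zS * X ^ 2 - ck V * X + zS = 0 then h.choose else 0

/-- `Λ = λ(1)`. -/
noncomputable def Lam : S := lam 1

/-- Numerator of the kernel `L(u,v) = 1 − zuv(1−z²)/((u−z)(1−zu))` after
clearing the denominator `(u−z)(1−zu)`. -/
noncomputable def Ln (U V : S) : S := (U - zS) * (1 - zS * U) - zS * U * V * (1 - zS ^ 2)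

/-- Numerator of the kernel `M(u,v) = 1 − zuv(1−z²)/((v−zu)(u−zv))` after
clearing the denominator `(v−zu)(u−zv)`. -/
noncomputable def Mn (U V : S) : S := (V - zS * U) * (U - zS * V) - zS * U * V * (1 - zS ^ 2)

/-- Numerator of `A(u,v)`. -/
noncomputable def An (U V : S) : S :=
  V * (U - zS ^ 2 * U - zS * U * lam V * aS + zS ^ 2 * V * lam V * aS)

/-- Denominator of `A(u,v)`, namely `(u−zv)(v−zu)(1−zλ(v)a)`. -/
noncomputable def Ad (U V : S) : S := (U - zS * V) * (V - zS * U) * (1 - zS * lam V * aS)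

/-- Numerator of `B(u,v)`. -/
noncomputable def Bn (U V : S) : S :=
  -(zS * U) * (U + V - zS * V - zS ^ 2 * V - V * aS + zS ^ 2 * V * aS)

/-- Denominator of `B(u,v)`, namely `(u−zv)(v−zu)`. -/
noncomputable def Bd (U V : S) : S := (U - zS * V) * (V - zS * U)

/-- Numerator of `C(u,v)`. -/
noncomputable def Cn (U V : S) : S := -(zS * V) * (zS * U - U * lam V + zS * V * lam V)

/-- Denominator of `C(u,v)`, namely `(λ(v)−z)(u−zv)`. -/
noncomputable def Cd (U V : S) : S := (lam V - zS) * (U - zS * V)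

/-- `𝒥(a) = 1 + Λ − zΛ − z²Λ − Λa + z²Λa`. -/
noncomputable def Jc : S := 1 + Lam - zS * Lam - zS ^ 2 * Lam - Lam * aS + zS ^ 2 * Lam * aS

/-- Numerator of `ℋ(q)`. -/
noncomputable def Hnum (q : S) : S :=
  (1 - zS ^ 2) * (1 - Lam ^ 2) *
    (1 - zS * aS * (1 + zS) * lam (q * Lam) + zS * aS * lam (q * Lam) ^ 2)

/-- Denominator of `ℋ(q)`, including the factor `𝒥(a)`. -/
noncomputable def Hden (q : S) : S :=
  Jc * ((1 - zS * Lam) * (1 - zS * aS * lam (q * Lam)) *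
    (1 - (1 - zS - zS ^ 2 + Lam) * lam (q * Lam)))

/-- Numerator of `ℐ(q)`. -/
noncomputable def Inum (q : S) : S :=
  (Lam - zS) * (1 - zS - zS ^ 2 - aS + zS ^ 2 * aS + Lam) *
    (zS - (1 - zS * Lam) * lam (q * Lam))

/-- Denominator of `ℐ(q)`, including the factor `𝒥(a)`. -/
noncomputable def Iden (q : S) : S :=
  Jc * (zS * (1 - zS * Lam) * (1 - (1 - zS - zS ^ 2 + Lam) * lam (q * Lam)))

end PrudentAdsorption

/-!
Substituting `Y = zX` turns `zX² − cX + z` into the monic `Y² − cY + z²`, which has the simple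
root `Y = 0` modulo `z` as soon as `c(0)` is a unit; `R⟦z⟧` is `z`-adically complete, so Hensel's
lemma lifts it to a root divisible by `z`. Two roots `x, y` satisfy `(c − z(x + y))(x − y) = 0`,
and the first factor is a unit, so the root is unique.
-/

section QuadraticRoot

open PowerSeries

variable {R : Type*} [CommRing R] {c : R⟦X⟧}

theorem PowerSeries.exists_X_mul_sq_sub_mul_add_X_eq_zero (hc : IsUnit (constantCoeff c)) :
    ∃ x : R⟦X⟧, X * x ^ 2 - c * x + X = 0 := by
  let f : Polynomial R⟦X⟧ :=
    Polynomial.X ^ 2 - Polynomial.C c * Polynomial.X + Polynomial.C (X ^ 2)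
  have hf : f.Monic := by unfold f; monicity!
  have hf0 : f.eval 0 ∈ Ideal.span {(X : R⟦X⟧)} := by
    simp [f, Ideal.mem_span_singleton, pow_two]
  have hf'0 : IsUnit (Ideal.Quotient.mk (Ideal.span {(X : R⟦X⟧)}) (f.derivative.eval 0)) := by
    have hf' : f.derivative.eval 0 = -c := by simp [f, Polynomial.derivative_pow]
    rw [hf', map_neg]
    exact ((isUnit_iff_constantCoeff.2 hc).map (Ideal.Quotient.mk _)).neg
  obtain ⟨y, hy, hyX⟩ := HenselianRing.is_henselian f hf 0 hf0 hf'0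
  obtain ⟨x, rfl⟩ := Ideal.mem_span_singleton'.1 (sub_zero y ▸ hyX)
  refine ⟨x, X_mul_cancel ?_⟩
  have hfx : (x * X) ^ 2 - c * (x * X) + X ^ 2 = 0 := by simpa [f] using hy.eq_zero
  linear_combination hfx

theorem PowerSeries.eq_of_X_mul_sq_sub_mul_add_X_eq_zero (hc : IsUnit (constantCoeff c))
    {x y : R⟦X⟧} (hx : X * x ^ 2 - c * x + X = 0) (hy : X * y ^ 2 - c * y + X = 0) :
    x = y := by
  have hfactor : (c - X * (x + y)) * (x - y) = 0 := by linear_combination hy - hx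
  have hunit : IsUnit (c - X * (x + y)) := isUnit_iff_constantCoeff.2 (by simpa using hc)
  exact sub_eq_zero.1 (hunit.mul_right_eq_zero.1 hfactor)

theorem PowerSeries.existsUnique_X_mul_sq_sub_mul_add_X_eq_zero (hc : IsUnit (constantCoeff c)) :
    ∃! x : R⟦X⟧, X * x ^ 2 - c * x + X = 0 :=
  let ⟨x, hx⟩ := exists_X_mul_sq_sub_mul_add_X_eq_zero hc
  ⟨x, hx, fun _ hy => eq_of_X_mul_sq_sub_mul_add_X_eq_zero hc hy hx⟩

end QuadraticRoot

namespace PrudentAdsorption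

theorem constantCoeff_ck (V : S) : PowerSeries.constantCoeff (ck V) = 1 := by
  simp [ck, zS]

theorem existsUnique_kernel_root (V : S) : ∃! X : S, zS * X ^ 2 - ck V * X + zS = 0 :=
  PowerSeries.existsUnique_X_mul_sq_sub_mul_add_X_eq_zero <| by
    rw [constantCoeff_ck]; exact isUnit_one

theorem lam_spec (V : S) : zS * lam V ^ 2 - ck V * lam V + zS = 0 := by
  have hex := (existsUnique_kernel_root V).exists
  rw [lam, dif_pos hex]
  exact hex.choose_spec

theorem Ln_lam_eq_zero (V : S) : Ln (lam V) V = 0 := by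
  have hroot := lam_spec V
  unfold Ln
  unfold ck at hroot
  linear_combination -hroot

/-- The quadratic `zX² − (1 + z² − zv + z³v)X + z = 0`
(obtained by clearing denominators in the vanishing of the kernel `L(X,v)`)
has exactly one root which is a formal power series in `z`; this root is
`λ(v) = ((1+z²−zv+z³v) − √((1+z²−zv+z³v)² − 4z²))/(2z)` — expressed
algebraically by `(c(v) − 2zλ(v))² = c(v)² − 4z²`, which pins down the square
root — and it satisfies `L(λ(v),v) = 0` after clearing denominators. -/
theorem kernel_root_lambda :
    (∃! X : S, zS * X ^ 2 - ck vS * X + zS = 0) ∧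
    zS * lam vS ^ 2 - ck vS * lam vS + zS = 0 ∧
    (ck vS - 2 * zS * lam vS) ^ 2 = ck vS ^ 2 - 4 * zS ^ 2 ∧
    Ln (lam vS) vS = 0 := by
  have hroot := lam_spec vS
  exact ⟨existsUnique_kernel_root vS, hroot, by linear_combination 4 * zS * hroot,
    Ln_lam_eq_zero vS⟩

end PrudentAdsorption
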